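/- Consider the explicit upwind density update on a finite graph: ρ_i^{m+1} = ρ_i^m − τ Σ_{j ∈ N(i)} √(ω_{ij}) ( (v_{i,j}^m)^+ ρ_i^m − (v_{i,j}^m)^- ρ_j^m ), where (x)^+ = max(x,0) and (x)^- = max(−x,0). If ρ^m ≥ 0 componentwise and the time step satisfies τ Σ_{j ∈ N(i)} √(ω_{ij}) (v_{i,j}^m)^+ ≤ 1 for every node i, then ρ^{m+1} ≥ 0 componentwise. -/

import Mathlib

open Finset

/-! The upwind update splits as `ρ i (1 - τ · outflow rate at i) + τ · inflow from the neighbours`: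
the first term is nonnegative by the CFL condition, the second because the inflow from `j` is
`√ω_ij (v_ij)⁻ ρ_j ≥ 0`. -/

theorem upwind_update_eq_retained_add_inflow {ι : Type*} (s : Finset ι) (a b c y : ι → ℝ)
    (x τ : ℝ) :
    x - τ * ∑ j ∈ s, a j * (b j * x - c j * y j) =
      x * (1 - τ * ∑ j ∈ s, a j * b j) + τ * ∑ j ∈ s, a j * c j * y j := by
  simp only [mul_sub, sum_sub_distrib, mul_sum]
  ring_nf

theorem upwind_update_nonneg {ι : Type*} (s : Finset ι) (a b c y : ι → ℝ) {x τ : ℝ}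
    (hx : 0 ≤ x) (hτ : 0 ≤ τ) (hCFL : τ * ∑ j ∈ s, a j * b j ≤ 1)
    (hinflow : ∀ j ∈ s, 0 ≤ a j * c j * y j) :
    0 ≤ x - τ * ∑ j ∈ s, a j * (b j * x - c j * y j) := by
  rw [upwind_update_eq_retained_add_inflow]
  have hretained : 0 ≤ x * (1 - τ * ∑ j ∈ s, a j * b j) := mul_nonneg hx (by linarith)
  have hin : 0 ≤ τ * ∑ j ∈ s, a j * c j * y j := mul_nonneg hτ (sum_nonneg hinflow)
  linarith

theorem stmt_2_general {V : Type*}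
    (N : V → Finset V) (ω : V → V → ℝ) (v : V → V → ℝ)
    (ρ ρ' : V → ℝ) (τ : ℝ) (hτ : 0 < τ)
    (hρ : ∀ i, 0 ≤ ρ i)
    (hCFL : ∀ i, τ * ∑ j ∈ N i, Real.sqrt (ω i j) * max (v i j) 0 ≤ 1)
    (hupdate : ∀ i, ρ' i = ρ i - τ * ∑ j ∈ N i,
      Real.sqrt (ω i j) * (max (v i j) 0 * ρ i - max (-(v i j)) 0 * ρ j)) :
    ∀ i, 0 ≤ ρ' i := by
  intro i
  rw [hupdate i]
  refine upwind_update_nonneg (N i) _ _ _ ρ (hρ i) hτ.le (hCFL i) fun j _ => ?_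
  exact mul_nonneg (mul_nonneg (Real.sqrt_nonneg _) (le_max_right _ _)) (hρ j)

/-- **Non-negativity preservation of the upwind density update under a CFL condition.**
For the explicit upwind update
`ρ' i = ρ i − τ ∑_{j ∈ N i} √(ω i j) ((v i j)⁺ ρ i − (v i j)⁻ ρ j)`,
if `ρ ≥ 0` componentwise and `τ ∑_{j ∈ N i} √(ω i j) (v i j)⁺ ≤ 1` for every
node `i`, then `ρ' ≥ 0` componentwise. -/
theorem stmt_2 {V : Type*} [Fintype V] [DecidableEq V]
    (N : V → Finset V) (ω : V → V → ℝ) (v : V → V → ℝ)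
    (ρ ρ' : V → ℝ) (τ : ℝ) (hτ : 0 < τ)
    (hωpos : ∀ i j, j ∈ N i → 0 < ω i j)
    (hρ : ∀ i, 0 ≤ ρ i)
    (hCFL : ∀ i, τ * ∑ j ∈ N i, Real.sqrt (ω i j) * max (v i j) 0 ≤ 1)
    (hupdate : ∀ i, ρ' i = ρ i - τ * ∑ j ∈ N i,
      Real.sqrt (ω i j) * (max (v i j) 0 * ρ i - max (-(v i j)) 0 * ρ j)) :
    ∀ i, 0 ≤ ρ' i :=
  stmt_2_general N ω v ρ ρ' τ hτ hρ hCFL hupdate
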